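/- arXiv:math/0406370 — 2 statements merged into one kernel-verified Lean document; each statement's English description precedes it below -/
import Mathlib

section
/- Let 𝒮 be a fine, measurable, λ-Morse cover of an open set Ω ⊆ X that is scaled, i.e., for each S(a) ∈ 𝒮 and each p ∈ (0,1] the set S^(p)(a) = {a + p·x : a + x ∈ S(a)} also belongs to 𝒮. Then 𝒮 is a μ-a.e. λ-Morse cover of Ω. -/
open MeasureTheory Set Metric Filter

/-- `S` is a `λ`-Morse set with tag `a`: for some `r > 0`, `B(a,r) ⊆ S ⊆ B(a,λr)`
(closed balls) and `S` is starlike with respect to `B(a,r)`. -/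
def IsMorseSet {X : Type*} [NormedAddCommGroup X] [NormedSpace ℝ X]
    (lam : ℝ) (a : X) (S : Set X) : Prop :=
  ∃ r > (0:ℝ), Metric.closedBall a r ⊆ S ∧ S ⊆ Metric.closedBall a (lam * r) ∧
    ∀ y ∈ Metric.closedBall a r, ∀ x ∈ S, segment ℝ y x ⊆ S

/-- `𝒮` (a collection of tagged sets) is a fine, measurable, `λ`-Morse cover of `Ω`:
every member is a measurable λ-Morse subset of `Ω` with the indicated tag, and every point
of `Ω` is the tag of sets of `𝒮` of arbitrarily small diameter. -/
def IsFineMorseCover {X : Type*} [NormedAddCommGroup X] [NormedSpace ℝ X] [MeasurableSpace X]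
    (lam : ℝ) (Ω : Set X) (𝒮 : Set (X × Set X)) : Prop :=
  (∀ p ∈ 𝒮, IsMorseSet lam p.1 p.2 ∧ MeasurableSet p.2 ∧ p.2 ⊆ Ω) ∧
  ∀ a ∈ Ω, ∀ ε > (0:ℝ), ∃ S : Set X, (a, S) ∈ 𝒮 ∧ Metric.diam S < ε

/-- The (finite or countably infinite) sequence of tagged sets `T` indexed by `I ⊆ ℕ`
is `μ`-exhausting of `Ω` within the collection `𝒮`: its members belong to `𝒮`,
are pairwise disjoint, and cover all but a `μ`-null subset of `Ω`. -/
def IsExhausting {X : Type*} [MeasurableSpace X] (μ : Measure X) (Ω : Set X)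
    (𝒮 : Set (X × Set X)) (I : Set ℕ) (T : ℕ → X × Set X) : Prop :=
  (∀ i ∈ I, T i ∈ 𝒮) ∧
  (∀ i ∈ I, ∀ j ∈ I, i ≠ j → Disjoint (T i).2 (T j).2) ∧
  μ (Ω \ ⋃ i ∈ I, (T i).2) = 0

/-- `𝒮` is a `μ`-a.e. `λ`-Morse cover of `Ω`: it is a fine measurable λ-Morse cover and,
for every nonempty open `U ⊆ Ω` and every gauge `δ : U → (0,1]`, there is a sequence of
`δ`-fine sets from `𝒮`, each contained in `U`, that is `μ`-exhausting of `U`. -/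
def IsAEMorseCover {X : Type*} [NormedAddCommGroup X] [NormedSpace ℝ X] [MeasurableSpace X]
    (μ : Measure X) (lam : ℝ) (Ω : Set X) (𝒮 : Set (X × Set X)) : Prop :=
  IsFineMorseCover lam Ω 𝒮 ∧
  ∀ U : Set X, IsOpen U → U.Nonempty → U ⊆ Ω →
    ∀ δ : X → ℝ, (∀ x ∈ U, δ x ∈ Set.Ioc (0:ℝ) 1) →
      ∃ I T, IsExhausting μ U 𝒮 I T ∧
        ∀ i ∈ I, (T i).2 ⊆ U ∧ (T i).2 ⊆ Metric.closedBall (T i).1 (δ (T i).1)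

/-- `f` is `μ`-measurable: there is a sequence of simple functions converging to `f`
`μ`-almost everywhere. -/
def MuMeasurable {X Y : Type*} [MeasurableSpace X] [NormedAddCommGroup Y]
    (μ : Measure X) (f : X → Y) : Prop :=
  ∃ F : ℕ → MeasureTheory.SimpleFunc X Y,
    ∀ᵐ x ∂μ, Filter.Tendsto (fun n => F n x) Filter.atTop (nhds (f x))

/-- `a` is a point of approximate continuity of `f` (relative to the tagged collection
`𝒮`): for all `ε, η > 0` there is `R > 0` such that every `S ∈ 𝒮` with tag `a` contained
in `B(a,R)` satisfies `μ {x ∈ S | ‖f a - f x‖ > η} ≤ ε · μ S`. -/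
def IsApproxContPt {X Y : Type*} [NormedAddCommGroup X] [MeasurableSpace X]
    [NormedAddCommGroup Y] (μ : Measure X) (𝒮 : Set (X × Set X)) (f : X → Y) (a : X) : Prop :=
  ∀ ε > (0:ℝ), ∀ η > (0:ℝ), ∃ R > (0:ℝ), ∀ S : Set X, (a, S) ∈ 𝒮 →
    S ⊆ Metric.closedBall a R →
    μ {x ∈ S | η < ‖f a - f x‖} ≤ ENNReal.ofReal ε * μ S

/-- `a` is a Lebesgue point of `g` with respect to the value `c` (relative to the tagged
collection `𝒮`): for every `ε > 0` there is `R > 0` such that every `S ∈ 𝒮` with tag `a`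
contained in `B(a,R)` satisfies `∫_S ‖g x - c‖ dμ ≤ ε · μ S`. -/
def IsLebesguePt {X Y : Type*} [NormedAddCommGroup X] [MeasurableSpace X]
    [NormedAddCommGroup Y] (μ : Measure X) (𝒮 : Set (X × Set X)) (g : X → Y) (a : X)
    (c : Y) : Prop :=
  ∀ ε > (0:ℝ), ∃ R > (0:ℝ), ∀ S : Set X, (a, S) ∈ 𝒮 → S ⊆ Metric.closedBall a R →
    ∫⁻ x in S, ‖g x - c‖₊ ∂μ ≤ ENNReal.ofReal ε * μ S

/-!
Vitali's covering theorem needs no doubling of `μ`, only `μ (closedBall x (3 r)) ≤ C * μ B` for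
the sets `B` it selects. Comparing `μ` with a Haar measure by Besicovitch's differentiation
theorem gives, at `μ`-a.e. `x`, arbitrarily small `t` with
`μ (closedBall x (K t)) ≤ K ^ (n + 1) * μ (closedBall x t)`. The scaled copy `S^(q)(x)` of a
Morse set lies between the balls of radii `q r` and `λ q r`, so taking `q r` comparable to such
a `t` makes it admissible. Vitali's theorem selects closed sets, so `q` is also chosen such
that `closure S^(q) \ S^(q)` is null.
-/

open scoped ENNReal NNReal Topology
open AffineMap

section Homothety

variable {X : Type*} [NormedAddCommGroup X] [NormedSpace ℝ X]

theorem setOf_exists_add_smul_eq_image_homothety (a : X) (q : ℝ) (S : Set X) :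
    {y : X | ∃ x : X, a + x ∈ S ∧ y = a + q • x} = homothety a q '' S := by
  ext y
  simp only [mem_ofPred_eq, mem_image, homothety_apply, vsub_eq_sub, vadd_eq_add]
  constructor
  · rintro ⟨x, hx, rfl⟩
    exact ⟨a + x, hx, by rw [add_sub_cancel_left, add_comm]⟩
  · rintro ⟨z, hz, rfl⟩
    exact ⟨z - a, by rwa [add_sub_cancel], add_comm _ _⟩

theorem dist_homothety_homothety (c x y : X) (q : ℝ) :
    dist (homothety c q x) (homothety c q y) = ‖q‖ * dist x y := by
  simp only [homothety_apply, vsub_eq_sub, vadd_eq_add, dist_eq_norm, add_sub_add_right_eq_sub,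
    ← smul_sub, sub_sub_sub_cancel_right, norm_smul]

theorem closedBall_mul_subset_image_homothety {a : X} {q r : ℝ} (hq : 0 < q) :
    closedBall a (q * r) ⊆ homothety a q '' closedBall a r := by
  intro y hy
  refine ⟨homothety a q⁻¹ y, ?_, by rw [← homothety_mul_apply, mul_inv_cancel₀ hq.ne',
    homothety_one, AffineMap.id_apply]⟩
  rw [mem_closedBall, dist_homothety_center, Real.norm_of_nonneg (inv_nonneg.2 hq.le),
    dist_comm, inv_mul_le_iff₀ hq]
  exact hy

theorem image_homothety_subset_closedBall {a : X} {q R : ℝ} {S : Set X} (hq : 0 ≤ q)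
    (hS : S ⊆ closedBall a R) : homothety a q '' S ⊆ closedBall a (q * R) := by
  rintro _ ⟨x, hx, rfl⟩
  rw [mem_closedBall, dist_homothety_center, Real.norm_of_nonneg hq, dist_comm]
  exact mul_le_mul_of_nonneg_left (hS hx) hq

variable {a : X} {r : ℝ} {S : Set X}

theorem image_homothety_subset_of_starConvex (hS : StarConvex ℝ a S) {q : ℝ} (hq₀ : 0 ≤ q)
    (hq₁ : q ≤ 1) : homothety a q '' S ⊆ S := by
  rintro _ ⟨x, hx, rfl⟩
  rw [homothety_apply, vsub_eq_sub, vadd_eq_add, add_comm]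
  exact hS.add_smul_sub_mem hx hq₀ hq₁

/-- Each `z` of the ball is `(1 - p) • y + p • x` for some `y ∈ closedBall a r`. -/
theorem closedBall_homothety_subset_of_starConvex
    (hS : ∀ y ∈ closedBall a r, StarConvex ℝ y S) {x : X} (hx : x ∈ S) {p : ℝ} (hp₀ : 0 ≤ p)
    (hp₁ : p < 1) : closedBall (homothety a p x) ((1 - p) * r) ⊆ S := by
  intro z hz
  have hp : 0 < 1 - p := sub_pos.2 hp₁
  set y := a + (1 - p)⁻¹ • (z - homothety a p x)
  have hy : y ∈ closedBall a r := by
    rw [mem_closedBall, dist_eq_norm, add_sub_cancel_left, norm_smul,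
      Real.norm_of_nonneg (inv_nonneg.2 hp.le), inv_mul_le_iff₀ hp, ← dist_eq_norm]
    exact hz
  have hz : z = (1 - p) • y + p • x := by
    simp only [y, homothety_apply, vsub_eq_sub, vadd_eq_add, smul_add, smul_smul,
      mul_inv_cancel₀ hp.ne', one_smul]
    module
  rw [hz]
  exact hS y hy hx hp.le hp₀ (by ring)

theorem closure_image_homothety_subset_of_starConvex (hr : 0 < r)
    (hS : ∀ y ∈ closedBall a r, StarConvex ℝ y S) {q q' : ℝ} (hq : 0 < q) (hqq' : q < q') :
    closure (homothety a q '' S) ⊆ homothety a q' '' S := by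
  intro y hy
  have hq' : 0 < q' := hq.trans hqq'
  obtain ⟨_, ⟨x, hx, rfl⟩, hyx⟩ :=
    Metric.mem_closure_iff.1 hy ((q' - q) * r) (mul_pos (sub_pos.2 hqq') hr)
  have hxq : homothety a (q / q') x = homothety a q'⁻¹ (homothety a q x) := by
    rw [← homothety_mul_apply, div_eq_inv_mul]
  refine ⟨homothety a q'⁻¹ y, closedBall_homothety_subset_of_starConvex hS hx
    (div_nonneg hq.le hq'.le) ((div_lt_one hq').2 hqq') ?_, ?_⟩
  · rw [mem_closedBall, hxq, dist_homothety_homothety,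
      Real.norm_of_nonneg (inv_nonneg.2 hq'.le), inv_mul_le_iff₀ hq']
    calc dist y (homothety a q x) ≤ (q' - q) * r := hyx.le
      _ = q' * ((1 - q / q') * r) := by field_simp
  · rw [← homothety_mul_apply, mul_inv_cancel₀ hq'.ne', homothety_one, AffineMap.id_apply]

end Homothety

section MorseSet

variable {X : Type*} [NormedAddCommGroup X] [NormedSpace ℝ X] {lam : ℝ} {a : X} {S : Set X}

theorem IsMorseSet.mem (h : IsMorseSet lam a S) : a ∈ S :=
  let ⟨_, hr, hball, _⟩ := h
  hball (mem_closedBall_self hr.le)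

theorem IsMorseSet.isBounded (h : IsMorseSet lam a S) : Bornology.IsBounded S :=
  let ⟨_, _, _, hsub, _⟩ := h
  isBounded_closedBall.subset hsub

theorem IsMorseSet.interior_nonempty (h : IsMorseSet lam a S) : (interior S).Nonempty :=
  let ⟨_, hr, hball, _⟩ := h
  ⟨a, interior_mono (ball_subset_closedBall.trans hball) (by simpa [isOpen_ball.interior_eq])⟩

theorem IsMorseSet.closure_subset_closedBall_diam (h : IsMorseSet lam a S) :
    closure S ⊆ closedBall a (diam S) :=
  closure_minimal (fun _ hy => dist_le_diam_of_mem h.isBounded hy h.mem) isClosed_closedBall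

end MorseSet

section Measure

variable {X : Type*} [TopologicalSpace X] [MeasurableSpace X] {μ : Measure X}

/-- For `q < q'` the layer `closure (Z q) \ Z q` lies in `Z q'`, which the layer of `q'`
avoids, so the layers are disjoint and only countably many of them carry mass. -/
theorem exists_mem_Ioo_measure_closure_diff_eq_zero [OpensMeasurableSpace X] [SFinite μ]
    {Z : ℝ → Set X} {b c : ℝ} (hbc : b < c) (hZ : ∀ q ∈ Ioo b c, MeasurableSet (Z q))
    (hcl : ∀ q ∈ Ioo b c, ∀ q' ∈ Ioo b c, q < q' → closure (Z q) ⊆ Z q') :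
    ∃ q ∈ Ioo b c, μ (closure (Z q) \ Z q) = 0 := by
  by_contra! hpos
  have hdisj : Pairwise (Function.onFun Disjoint fun q : Ioo b c => closure (Z q) \ Z q) := by
    have key : ∀ q q' : Ioo b c, q < q' →
        Disjoint (closure (Z q) \ Z q) (closure (Z q') \ Z q') := fun q q' hlt =>
      disjoint_sdiff_right.mono_left (sdiff_subset.trans (hcl q q.2 q' q'.2 hlt))
    intro q q' hne
    rcases hne.lt_or_gt with hlt | hlt
    exacts [key q q' hlt, (key q' q hlt).symm]
  have hcount := Measure.countable_meas_pos_of_disjoint_iUnion (μ := μ)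
    (fun q : Ioo b c => isClosed_closure.measurableSet.diff (hZ q q.2)) hdisj
  have huniv : (univ : Set (Ioo b c)).Countable :=
    hcount.mono fun q _ => pos_iff_ne_zero.2 (hpos q q.2)
  rw [countable_univ_iff, countable_coe_iff, Cardinal.Real.Ioo_countable_iff] at huniv
  exact huniv.not_gt hbc

theorem measure_diff_biUnion_eq_zero_of_closure {ι : Type*} {s : Set X} {u : Set ι}
    {B : ι → Set X} (hu : u.Countable) (hcov : μ (s \ ⋃ i ∈ u, closure (B i)) = 0)
    (hB : ∀ i ∈ u, μ (closure (B i) \ B i) = 0) : μ (s \ ⋃ i ∈ u, B i) = 0 := by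
  refine measure_mono_null (t := (s \ ⋃ i ∈ u, closure (B i)) ∪ ⋃ i ∈ u, (closure (B i) \ B i))
    ?_ (measure_union_null hcov ((measure_biUnion_null_iff hu).2 hB))
  intro x ⟨hxs, hxB⟩
  by_cases hx : x ∈ ⋃ i ∈ u, closure (B i)
  · obtain ⟨i, hi, hxi⟩ := mem_iUnion₂.1 hx
    exact Or.inr (mem_biUnion hi ⟨hxi, fun h => hxB (mem_biUnion hi h)⟩)
  · exact Or.inl ⟨hxs, hx⟩

end Measure

theorem Set.Countable.exists_injOn_image_eq {α : Type*} [Nonempty α] {u : Set α}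
    (hu : u.Countable) : ∃ (I : Set ℕ) (T : ℕ → α), InjOn T I ∧ T '' I = u :=
  let ⟨f, hf⟩ := countable_iff_exists_injOn.1 hu
  ⟨f '' u, Function.invFunOn f u, Function.invFunOn_injOn_image f u, hf.invFunOn_image subset_rfl⟩

theorem exists_isExhausting_of_countable {X : Type*} [Nonempty X] [MeasurableSpace X]
    {μ : Measure X} {Ω : Set X} {𝒮 u : Set (X × Set X)} (hu : u.Countable) (hu𝒮 : u ⊆ 𝒮)
    (hdisj : u.PairwiseDisjoint Prod.snd) (hcov : μ (Ω \ ⋃ p ∈ u, p.2) = 0) :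
    ∃ I T, IsExhausting μ Ω 𝒮 I T := by
  obtain ⟨I, T, hT, rfl⟩ := hu.exists_injOn_image_eq
  refine ⟨I, T, fun i hi => hu𝒮 (mem_image_of_mem T hi), fun i hi j hj hij =>
    hdisj (mem_image_of_mem T hi) (mem_image_of_mem T hj) (hT.ne hi hj hij), ?_⟩
  rwa [biUnion_image] at hcov

theorem exists_isExhausting_of_ae_fine {X : Type*} [Nonempty X] [PseudoMetricSpace X]
    [SecondCountableTopology X] [MeasurableSpace X] [OpensMeasurableSpace X] (μ : Measure X)
    [IsLocallyFiniteMeasure μ] {U : Set X} {𝒯 : Set (X × Set X)} (C : ℝ≥0)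
    (h𝒯 : ∀ p ∈ 𝒯, closure p.2 ⊆ closedBall p.1 (diam p.2) ∧ (interior p.2).Nonempty ∧
      μ (closedBall p.1 (3 * diam p.2)) ≤ C * μ (closure p.2) ∧ μ (closure p.2 \ p.2) = 0)
    (hfine : ∀ᵐ x ∂μ, x ∈ U → ∀ ε > 0, ∃ p ∈ 𝒯, diam p.2 ≤ ε ∧ p.1 = x) :
    ∃ I T, IsExhausting μ U 𝒯 I T := by
  set s := {x ∈ U | ∀ ε > 0, ∃ p ∈ 𝒯, diam p.2 ≤ ε ∧ p.1 = x}
  have hs : μ (U \ s) = 0 := by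
    refine measure_mono_null (fun x hx => ?_) (ae_iff.1 hfine)
    exact fun h => hx.2 ⟨hx.1, h hx.1⟩
  obtain ⟨u, hu𝒯, huc, hudisj, hucov⟩ := Vitali.exists_disjoint_covering_ae μ s 𝒯 C
    (fun p => diam p.2) Prod.fst (fun p => closure p.2) (fun p hp => (h𝒯 p hp).1)
    (fun p hp => (h𝒯 p hp).2.2.1)
    (fun p hp => (h𝒯 p hp).2.1.mono (interior_mono subset_closure))
    (fun _ _ => isClosed_closure) fun x hx => hx.2
  have hcov : μ (U \ ⋃ p ∈ u, closure p.2) = 0 := by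
    refine measure_mono_null (fun x hx => ?_) (measure_union_null hs hucov)
    by_cases hxs : x ∈ s
    exacts [Or.inr ⟨hxs, hx.2⟩, Or.inl ⟨hx.1, hxs⟩]
  exact exists_isExhausting_of_countable huc hu𝒯 (hudisj.mono fun p => subset_closure)
    (measure_diff_biUnion_eq_zero_of_closure huc hcov fun p hp => (h𝒯 p (hu𝒯 hp)).2.2.2)

theorem div_pow_mem_Ioo {K ρ t₀ : ℝ} (hK : 1 ≤ K) (ht₀ : t₀ ∈ Ioo 0 ρ) (k : ℕ) :
    t₀ / K ^ k ∈ Ioo 0 ρ :=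
  ⟨div_pos ht₀.1 (pow_pos (zero_lt_one.trans_le hK) k),
    (div_le_self ht₀.1.le (one_le_pow₀ hK)).trans_lt ht₀.2⟩

theorem pow_mul_apply_div_pow_le {f : ℝ → ℝ≥0∞} {K : ℝ≥0} {c : ℝ≥0∞} {ρ t₀ : ℝ} (hK : 1 ≤ K)
    (hf : ∀ t ∈ Ioo 0 ρ, c * f t ≤ f (K * t)) (ht₀ : t₀ ∈ Ioo 0 ρ) (k : ℕ) :
    c ^ k * f (t₀ / K ^ k) ≤ f t₀ := by
  induction k with
  | zero => simp
  | succ k ih =>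
    have hKt : (K : ℝ) * (t₀ / K ^ (k + 1)) = t₀ / K ^ k := by
      have : (K : ℝ) ≠ 0 := NNReal.coe_ne_zero.2 (zero_lt_one.trans_le hK).ne'
      rw [pow_succ]; field_simp
    calc c ^ (k + 1) * f (t₀ / K ^ (k + 1)) = c ^ k * (c * f (t₀ / K ^ (k + 1))) := by ring
      _ ≤ c ^ k * f (t₀ / K ^ k) := by
        rw [← hKt]; gcongr; exact hf _ (div_pow_mem_Ioo (NNReal.one_le_coe.2 hK) ht₀ _)
      _ ≤ f t₀ := ih

/-- Otherwise `f` would grow by more than `K ^ (n + 1)` at every step of `t₀ / K ^ k`,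
which is incompatible with `f (t₀ / K ^ k) ≳ (t₀ / K ^ k) ^ n`. -/
theorem frequently_le_pow_succ_mul_of_eventually_pow_le {f : ℝ → ℝ≥0∞} {K : ℝ≥0} {n : ℕ}
    {c M : ℝ≥0∞} (hK : 1 < K) (hc : c ≠ 0) (hM : M ≠ ∞) (hf : ∀ t > 0, f t ≠ ∞)
    (hlow : ∀ᶠ t in 𝓝[>] 0, c * ENNReal.ofReal (t ^ n) ≤ M * f t) :
    ∃ᶠ t in 𝓝[>] 0, f (K * t) ≤ K ^ (n + 1) * f t := by
  by_contra hnot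
  simp only [not_frequently, not_le] at hnot
  obtain ⟨ρ, hρ, hsub⟩ := mem_nhdsGT_iff_exists_Ioo_subset.1 (hlow.and hnot)
  obtain ⟨t₀, ht₀⟩ := nonempty_Ioo.2 (mem_Ioi.1 hρ)
  have hbound (k : ℕ) : c * ENNReal.ofReal (t₀ ^ n) * (K : ℝ≥0∞) ^ k ≤ M * f t₀ := by
    have hk := div_pow_mem_Ioo (NNReal.one_le_coe.2 hK.le) ht₀ k
    have hf_le := pow_mul_apply_div_pow_le hK.le (fun t ht => (hsub ht).2.le) ht₀ k
    have hK0 : (K : ℝ) ≠ 0 := NNReal.coe_ne_zero.2 (zero_lt_one.trans hK).ne'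
    have hscale : ENNReal.ofReal (t₀ ^ n) * (K : ℝ≥0∞) ^ k =
        ((K : ℝ≥0∞) ^ (n + 1)) ^ k * ENNReal.ofReal ((t₀ / K ^ k) ^ n) := by
      rw [← ENNReal.ofReal_coe_nnreal, ← ENNReal.ofReal_pow NNReal.zero_le_coe,
        ← ENNReal.ofReal_pow NNReal.zero_le_coe, ← ENNReal.ofReal_pow (by positivity),
        ← ENNReal.ofReal_mul (pow_nonneg ht₀.1.le n), ← ENNReal.ofReal_mul (by positivity)]
      congr 1
      rw [div_pow, ← pow_mul, ← pow_mul]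
      field_simp
      ring
    calc c * ENNReal.ofReal (t₀ ^ n) * (K : ℝ≥0∞) ^ k
        = ((K : ℝ≥0∞) ^ (n + 1)) ^ k * (c * ENNReal.ofReal ((t₀ / K ^ k) ^ n)) := by
          rw [mul_assoc, hscale]; ring
      _ ≤ ((K : ℝ≥0∞) ^ (n + 1)) ^ k * (M * f (t₀ / K ^ k)) := by
          gcongr ((K : ℝ≥0∞) ^ (n + 1)) ^ k * ?_; exact (hsub hk).1
      _ = M * (((K : ℝ≥0∞) ^ (n + 1)) ^ k * f (t₀ / K ^ k)) := by ring
      _ ≤ M * f t₀ := by gcongr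
  have htop : Tendsto (fun k : ℕ => c * ENNReal.ofReal (t₀ ^ n) * (K : ℝ≥0∞) ^ k) atTop (𝓝 ∞) := by
    have hK' : (1 : ℝ≥0∞) < K := ENNReal.one_lt_coe_iff.2 hK
    have hpos : c * ENNReal.ofReal (t₀ ^ n) ≠ 0 :=
      mul_ne_zero hc (ENNReal.ofReal_pos.2 (pow_pos ht₀.1 n)).ne'
    simpa only [ENNReal.mul_top hpos] using
      ENNReal.Tendsto.const_mul (a := c * ENNReal.ofReal (t₀ ^ n))
        (ENNReal.tendsto_pow_atTop_nhds_top_iff.2 hK') (Or.inl ENNReal.top_ne_zero)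
  exact (ENNReal.mul_ne_top hM (hf t₀ ht₀.1)).lt_top.not_ge (le_of_tendsto' htop hbound)

section Doubling

variable {X : Type*} [NormedAddCommGroup X] [NormedSpace ℝ X] [FiniteDimensional ℝ X]
  [MeasurableSpace X]

/-- For a Haar measure `ν`, the ratio `ν (closedBall x t) / μ (closedBall x t)` has a finite
limit at `μ`-a.e. `x` by the Besicovitch differentiation theorem. -/
theorem ae_frequently_measure_closedBall_mul_le_of_borelSpace [BorelSpace X] (μ : Measure X)
    [IsLocallyFiniteMeasure μ] {K : ℝ≥0} (hK : 1 < K) :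
    ∀ᵐ x ∂μ, ∃ᶠ t in 𝓝[>] 0,
      μ (closedBall x (K * t)) ≤ K ^ (Module.finrank ℝ X + 1) * μ (closedBall x t) := by
  set ν : Measure X := Measure.addHaar
  filter_upwards [Besicovitch.ae_tendsto_rnDeriv ν μ, Measure.rnDeriv_lt_top ν μ]
    with x hlim hfin
  obtain ⟨M, hM, hM_top⟩ := exists_between hfin
  refine frequently_le_pow_succ_mul_of_eventually_pow_le hK
    (measure_closedBall_pos ν (0 : X) one_pos).ne' hM_top.ne
    (fun t _ => measure_closedBall_lt_top.ne) ?_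
  filter_upwards [hlim.eventually (gt_mem_nhds hM), self_mem_nhdsWithin] with t ht ht0
  rw [mul_comm, ← Measure.addHaar_closedBall' ν x (le_of_lt ht0)]
  exact ((ENNReal.div_lt_iff (Or.inr (measure_closedBall_pos ν x ht0).ne')
    (Or.inl measure_closedBall_lt_top.ne)).1 ht).le

theorem ae_frequently_measure_closedBall_mul_le [OpensMeasurableSpace X] (μ : Measure X)
    [IsLocallyFiniteMeasure μ] {K : ℝ≥0} (hK : 1 < K) :
    ∀ᵐ x ∂μ, ∃ᶠ t in 𝓝[>] 0,
      μ (closedBall x (K * t)) ≤ K ^ (Module.finrank ℝ X + 1) * μ (closedBall x t) := by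
  have hle : borel X ≤ ‹MeasurableSpace X› := OpensMeasurableSpace.borel_le
  have htrim : ∀ x t, μ.trim hle (closedBall x t) = μ (closedBall x t) := fun x t =>
    trim_measurableSet_eq hle (MeasurableSpace.measurableSet_generateFrom
      isClosed_closedBall.isOpen_compl).of_compl
  have hfin : @IsLocallyFiniteMeasure X (borel X) _ (μ.trim hle) :=
    ⟨fun x => ⟨closedBall x 1, closedBall_mem_nhds x one_pos,
      by rw [htrim]; exact measure_closedBall_lt_top⟩⟩
  filter_upwards [ae_of_ae_trim hle (@ae_frequently_measure_closedBall_mul_le_of_borelSpace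
    X _ _ _ (borel X) (@BorelSpace.mk X _ (borel X) rfl) (μ.trim hle) hfin K hK)] with x hx
  simpa only [htrim] using hx

end Doubling

section Covering

variable {X : Type*} [NormedAddCommGroup X] [NormedSpace ℝ X] [MeasurableSpace X]

theorem exists_image_homothety_doubling [OpensMeasurableSpace X] {μ : Measure X} [SFinite μ]
    {lam r t : ℝ} {C : ℝ≥0∞} {x : X} {S : Set X} (hr : 0 < r) (hball : closedBall x r ⊆ S)
    (hsub : S ⊆ closedBall x (lam * r)) (hstar : ∀ y ∈ closedBall x r, StarConvex ℝ y S)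
    (hmeas : ∀ q ∈ Ioo (0 : ℝ) 1, MeasurableSet (homothety x q '' S)) (ht : 0 < t)
    (htr : 2 * t < r) (hdbl : μ (closedBall x (12 * lam * t)) ≤ C * μ (closedBall x t)) :
    ∃ q ∈ Ioo (0 : ℝ) 1,
      μ (closedBall x (3 * diam (homothety x q '' S))) ≤ C * μ (closure (homothety x q '' S)) ∧
      μ (closure (homothety x q '' S) \ homothety x q '' S) = 0 := by
  have hlam : 0 ≤ lam := by
    have : 0 ≤ lam * r := by simpa using hsub (hball (mem_closedBall_self hr.le))
    exact nonneg_of_mul_nonneg_left this hr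
  have hI : Ioo (t / r) (2 * t / r) ⊆ Ioo 0 1 := fun q hq =>
    ⟨(div_pos ht hr).trans hq.1, hq.2.trans ((div_lt_one hr).2 htr)⟩
  obtain ⟨q, hq, hnull⟩ := exists_mem_Ioo_measure_closure_diff_eq_zero (μ := μ)
    (Z := fun q => homothety x q '' S) (div_lt_div_of_pos_right (by linarith) hr)
    (fun q hq => hmeas q (hI hq))
    (fun q hq _ _ hqq' => closure_image_homothety_subset_of_starConvex hr hstar (hI hq).1 hqq')
  have hq₀ : 0 < q := (hI hq).1
  have hqr : t < q * r ∧ q * r < 2 * t := ⟨(div_lt_iff₀ hr).1 hq.1, (lt_div_iff₀ hr).1 hq.2⟩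
  refine ⟨q, hI hq, ?_, hnull⟩
  -- `12 = 3 * 2 * 2`: the scaled set lies in `closedBall x (λ q r)` and `q r < 2 t`
  have hdiam : 3 * diam (homothety x q '' S) ≤ 12 * lam * t := by
    have := (diam_mono (image_homothety_subset_closedBall hq₀.le hsub) isBounded_closedBall).trans
      (diam_closedBall (by positivity))
    nlinarith
  calc μ (closedBall x (3 * diam (homothety x q '' S)))
      ≤ μ (closedBall x (12 * lam * t)) := measure_mono (closedBall_subset_closedBall hdiam)
    _ ≤ C * μ (closedBall x t) := hdbl
    _ ≤ C * μ (closure (homothety x q '' S)) := by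
      gcongr
      exact (closedBall_subset_closedBall hqr.1.le).trans <|
        (closedBall_mul_subset_image_homothety hq₀).trans <| (image_mono hball).trans subset_closure

variable {lam : ℝ} {Ω : Set X} {𝒮 : Set (X × Set X)}

theorem IsFineMorseCover.exists_doubling_mem_of_scaled [OpensMeasurableSpace X]
    {μ : Measure X} [SFinite μ] (h𝒮 : IsFineMorseCover lam Ω 𝒮)
    (hscaled : ∀ p ∈ 𝒮, ∀ q ∈ Set.Ioc (0:ℝ) 1,
      (p.1, {y : X | ∃ x : X, p.1 + x ∈ p.2 ∧ y = p.1 + q • x}) ∈ 𝒮)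
    {C : ℝ≥0∞} {x : X} (hx : x ∈ Ω)
    (hdbl : ∃ᶠ t in 𝓝[>] 0, μ (closedBall x (12 * lam * t)) ≤ C * μ (closedBall x t))
    {V : Set X} (hV : V ∈ 𝓝 x) {ε : ℝ} (hε : 0 < ε) :
    ∃ S, (x, S) ∈ 𝒮 ∧ S ⊆ V ∧ diam S < ε ∧
      μ (closedBall x (3 * diam S)) ≤ C * μ (closure S) ∧ μ (closure S \ S) = 0 := by
  obtain ⟨η, hη, hηV⟩ := nhds_basis_closedBall.mem_iff.1 hV
  obtain ⟨S, hS, hdiam⟩ := h𝒮.2 x hx _ (lt_min hη hε)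
  have hSV : S ⊆ V := subset_closure.trans <|
    (h𝒮.1 _ hS).1.closure_subset_closedBall_diam.trans <|
      (closedBall_subset_closedBall (hdiam.le.trans (min_le_left _ _))).trans hηV
  obtain ⟨r, hr, hball, hsub, hseg⟩ := (h𝒮.1 _ hS).1
  have hstar : ∀ y ∈ closedBall x r, StarConvex ℝ y S := fun y hy =>
    starConvex_iff_segment_subset.2 (hseg y hy)
  have hmem : ∀ q ∈ Ioc (0 : ℝ) 1, (x, homothety x q '' S) ∈ 𝒮 := fun q hq => by
    simpa only [setOf_exists_add_smul_eq_image_homothety] using hscaled (x, S) hS q hq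
  obtain ⟨t, hdbl_t, ht⟩ := (hdbl.and_eventually (Ioo_mem_nhdsGT (half_pos hr))).exists
  obtain ⟨q, hq, hZ_dbl, hZ_null⟩ := exists_image_homothety_doubling hr hball hsub hstar
    (fun q hq => (h𝒮.1 _ (hmem q ⟨hq.1, hq.2.le⟩)).2.1) ht.1 (by linarith [ht.2]) hdbl_t
  have hZS : homothety x q '' S ⊆ S :=
    image_homothety_subset_of_starConvex (hstar x (mem_closedBall_self hr.le)) hq.1.le hq.2.le
  refine ⟨_, hmem q ⟨hq.1, hq.2.le⟩, hZS.trans hSV, ?_, hZ_dbl, hZ_null⟩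
  exact ((diam_mono hZS (h𝒮.1 _ hS).1.isBounded).trans_lt hdiam).trans_le (min_le_right _ _)

end Covering

theorem isAEMorseCover_of_scaled_general
    {X : Type*} [NormedAddCommGroup X] [NormedSpace ℝ X] [FiniteDimensional ℝ X]
    [MeasurableSpace X] [OpensMeasurableSpace X]
    (μ : Measure X) [μ.Regular]
    (lam : ℝ) (hlam : 1 ≤ lam) (Ω : Set X)
    (𝒮 : Set (X × Set X)) (h𝒮 : IsFineMorseCover lam Ω 𝒮)
    (hscaled : ∀ p ∈ 𝒮, ∀ q ∈ Set.Ioc (0:ℝ) 1,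
      (p.1, {y : X | ∃ x : X, p.1 + x ∈ p.2 ∧ y = p.1 + q • x}) ∈ 𝒮) :
    IsAEMorseCover μ lam Ω 𝒮 := by
  refine ⟨h𝒮, fun U hU _ hUΩ δ hδ => ?_⟩
  set K : ℝ≥0 := ⟨12 * lam, by linarith⟩
  have hK : 1 < K := by rw [← NNReal.coe_lt_coe]; change (1 : ℝ) < 12 * lam; linarith
  set 𝒯 := {p ∈ 𝒮 | p.2 ⊆ U ∩ closedBall p.1 (δ p.1) ∧
    μ (closedBall p.1 (3 * diam p.2)) ≤ ↑(K ^ (Module.finrank ℝ X + 1)) * μ (closure p.2) ∧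
    μ (closure p.2 \ p.2) = 0}
  have hfine : ∀ᵐ x ∂μ, x ∈ U → ∀ ε > 0, ∃ p ∈ 𝒯, diam p.2 ≤ ε ∧ p.1 = x := by
    filter_upwards [ae_frequently_measure_closedBall_mul_le μ hK] with x hx hxU ε hε
    obtain ⟨S, hS, hSV, hdiam, hdbl, hnull⟩ := h𝒮.exists_doubling_mem_of_scaled hscaled
      (hUΩ hxU) hx (inter_mem (hU.mem_nhds hxU) (closedBall_mem_nhds x (hδ x hxU).1)) hε
    exact ⟨(x, S), ⟨hS, hSV, by rwa [ENNReal.coe_pow], hnull⟩, hdiam.le, rfl⟩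
  obtain ⟨I, T, hexh⟩ := exists_isExhausting_of_ae_fine μ _ (fun p hp =>
    ⟨(h𝒮.1 p hp.1).1.closure_subset_closedBall_diam, (h𝒮.1 p hp.1).1.interior_nonempty,
      hp.2.2.1, hp.2.2.2⟩) hfine
  exact ⟨I, T, ⟨fun i hi => (hexh.1 i hi).1, hexh.2⟩,
    fun i hi => subset_inter_iff.1 (hexh.1 i hi).2.1⟩

/-- A fine, measurable, `λ`-Morse cover `𝒮` of an open set `Ω` that is *scaled*
(for each `S(a) ∈ 𝒮` and `p ∈ (0,1]`, the set `S^(p)(a) = {a + p·x : a + x ∈ S(a)}`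
is also in `𝒮`, with tag `a`) is a `μ`-a.e. `λ`-Morse cover of `Ω`. -/
theorem isAEMorseCover_of_scaled
    {X : Type*} [NormedAddCommGroup X] [NormedSpace ℝ X] [FiniteDimensional ℝ X]
    [MeasurableSpace X] [OpensMeasurableSpace X]
    (μ : Measure X) [μ.Regular] [μ.IsComplete]
    (lam : ℝ) (hlam : 1 ≤ lam) (Ω : Set X) (hΩ : IsOpen Ω)
    (𝒮 : Set (X × Set X)) (h𝒮 : IsFineMorseCover lam Ω 𝒮)
    (hscaled : ∀ p ∈ 𝒮, ∀ q ∈ Set.Ioc (0:ℝ) 1,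
      (p.1, {y : X | ∃ x : X, p.1 + x ∈ p.2 ∧ y = p.1 + q • x}) ∈ 𝒮) :
    IsAEMorseCover μ lam Ω 𝒮 :=
  isAEMorseCover_of_scaled_general μ lam hlam Ω 𝒮 h𝒮 hscaled
end

section
/- Let 𝒮 be a μ-a.e. λ-Morse cover of an open set Ω ⊆ X, Y a Banach space, and f : Ω → Y μ-measurable. If a ∈ Ω is a point of approximate continuity of f and is also a Lebesgue point of the real-valued function x ↦ ‖f(x)‖ with respect to the value ‖f(a)‖, then a is a Lebesgue point of f with respect to f(a). -/
/-!
Split a tagged set `S` along the exceptional set `E = {x ∈ S | η < ‖f a - f x‖}`. Off `E` the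
integrand `‖f x - f a‖` is at most `η`; on `E` it is at most `|‖f x‖ - ‖f a‖| + 2‖f a‖`, whose
first term is controlled by the Lebesgue point of `‖f‖` and whose second contributes at most
`2‖f a‖ μ E`, small by approximate continuity.
-/

open MeasureTheory Set Metric Filter

theorem MuMeasurable.aestronglyMeasurable {X Y : Type*} [MeasurableSpace X]
    [NormedAddCommGroup Y] {μ : Measure X} {f : X → Y} (hf : MuMeasurable μ f) :
    AEStronglyMeasurable f μ :=
  let ⟨F, hF⟩ := hf
  aestronglyMeasurable_of_tendsto_ae atTop (fun n => (F n).aestronglyMeasurable) hF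

theorem enorm_sub_le_ofReal_add_indicator {X Y : Type*} [NormedAddCommGroup Y] (f : X → Y)
    (c : Y) (η : ℝ) (x : X) :
    ‖f x - c‖ₑ ≤ ENNReal.ofReal η + ‖‖f x‖ - ‖c‖‖ₑ +
      {x | η < ‖c - f x‖}.indicator (fun _ => 2 * ‖c‖ₑ) x := by
  by_cases hx : x ∈ {x | η < ‖c - f x‖}
  · rw [indicator_of_mem hx]
    have hreal : ‖f x - c‖ ≤ ‖‖f x‖ - ‖c‖‖ + 2 * ‖c‖ := by
      rw [Real.norm_eq_abs]
      linarith [norm_sub_le (f x) c, le_abs_self (‖f x‖ - ‖c‖)]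
    calc ‖f x - c‖ₑ ≤ ENNReal.ofReal (‖‖f x‖ - ‖c‖‖ + 2 * ‖c‖) := by
          rw [← ofReal_norm]; exact ENNReal.ofReal_le_ofReal hreal
      _ = ‖‖f x‖ - ‖c‖‖ₑ + 2 * ‖c‖ₑ := by
          rw [ENNReal.ofReal_add (norm_nonneg _) (by positivity), ENNReal.ofReal_mul zero_le_two,
            ofReal_norm, ofReal_norm, ENNReal.ofReal_ofNat]
      _ ≤ _ := by gcongr; exact le_add_self
  · rw [indicator_of_notMem hx, add_zero]
    refine le_add_right ?_
    rw [← ofReal_norm, norm_sub_rev]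
    exact ENNReal.ofReal_le_ofReal (not_lt.mp hx)

section

variable {X Y : Type*} [MeasurableSpace X] [NormedAddCommGroup Y]

theorem lintegral_enorm_sub_le {ν : Measure X} {f : X → Y} (hf : AEStronglyMeasurable f ν)
    (c : Y) (η : ℝ) :
    ∫⁻ x, ‖f x - c‖ₑ ∂ν ≤ ENNReal.ofReal η * ν univ + ∫⁻ x, ‖‖f x‖ - ‖c‖‖ₑ ∂ν +
      2 * ‖c‖ₑ * ν {x | η < ‖c - f x‖} := by
  have hnorm : AEMeasurable (fun x => ‖‖f x‖ - ‖c‖‖ₑ) ν :=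
    (hf.norm.sub aestronglyMeasurable_const).enorm
  calc ∫⁻ x, ‖f x - c‖ₑ ∂ν
      ≤ ∫⁻ x, (ENNReal.ofReal η + ‖‖f x‖ - ‖c‖‖ₑ +
          {x | η < ‖c - f x‖}.indicator (fun _ => 2 * ‖c‖ₑ) x) ∂ν :=
        lintegral_mono (enorm_sub_le_ofReal_add_indicator f c η)
    _ = ENNReal.ofReal η * ν univ + ∫⁻ x, ‖‖f x‖ - ‖c‖‖ₑ ∂ν +
          ∫⁻ x, {x | η < ‖c - f x‖}.indicator (fun _ => 2 * ‖c‖ₑ) x ∂ν := by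
        rw [lintegral_add_left' (f := fun x => ENNReal.ofReal η + ‖‖f x‖ - ‖c‖‖ₑ)
            (aemeasurable_const.add hnorm),
          lintegral_add_left measurable_const, lintegral_const]
    _ ≤ _ := by gcongr; exact lintegral_indicator_const_le _ _

theorem setLIntegral_enorm_sub_le {μ : Measure X} {S : Set X} (hS : MeasurableSet S) {f : X → Y}
    (hf : AEStronglyMeasurable f (μ.restrict S)) (c : Y) (η : ℝ) :
    ∫⁻ x in S, ‖f x - c‖ₑ ∂μ ≤ ENNReal.ofReal η * μ S + ∫⁻ x in S, ‖‖f x‖ - ‖c‖‖ₑ ∂μ +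
      2 * ‖c‖ₑ * μ {x ∈ S | η < ‖c - f x‖} := by
  have hE : μ.restrict S {x | η < ‖c - f x‖} = μ {x ∈ S | η < ‖c - f x‖} := by
    rw [Measure.restrict_apply' hS, inter_comm]; rfl
  simpa only [Measure.restrict_apply_univ, hE] using lintegral_enorm_sub_le hf c η

end

theorem isLebesguePt_of_approxCont_and_norm_lebesguePt_general
    {X Y : Type*} [NormedAddCommGroup X] [NormedSpace ℝ X]
    [MeasurableSpace X]
    [NormedAddCommGroup Y]
    (μ : Measure X)
    (lam : ℝ) (Ω : Set X)
    (𝒮 : Set (X × Set X)) (h𝒮 : IsAEMorseCover μ lam Ω 𝒮)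
    (f : X → Y) (hf : MuMeasurable (μ.restrict Ω) f)
    (a : X)
    (hac : IsApproxContPt μ 𝒮 f a)
    (hnorm : IsLebesguePt μ 𝒮 (fun x => ‖f x‖) a ‖f a‖) :
    IsLebesguePt μ 𝒮 f a (f a) := by
  intro ε hε
  set δ := ε / (3 * (2 * ‖f a‖ + 1))
  obtain ⟨R₁, hR₁, hac⟩ := hac δ (by positivity) (ε / 3) (by positivity)
  obtain ⟨R₂, hR₂, hnorm⟩ := hnorm (ε / 3) (by positivity)
  refine ⟨min R₁ R₂, lt_min hR₁ hR₂, fun S hS hSR => ?_⟩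
  obtain ⟨-, hSm, hSΩ⟩ := h𝒮.1.1 (a, S) hS
  have hfS := hf.aestronglyMeasurable.mono_measure (Measure.restrict_mono hSΩ le_rfl)
  have hsmall : 2 * ‖f a‖ * δ ≤ ε / 3 := by
    rw [mul_div_assoc', div_le_div_iff₀ (by positivity) (by positivity)]
    nlinarith [norm_nonneg (f a)]
  calc ∫⁻ x in S, ‖f x - f a‖ₑ ∂μ
      ≤ ENNReal.ofReal (ε / 3) * μ S + ∫⁻ x in S, ‖‖f x‖ - ‖f a‖‖ₑ ∂μ +
          2 * ‖f a‖ₑ * μ {x ∈ S | ε / 3 < ‖f a - f x‖} :=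
        setLIntegral_enorm_sub_le hSm hfS (f a) (ε / 3)
    _ ≤ ENNReal.ofReal (ε / 3) * μ S + ENNReal.ofReal (ε / 3) * μ S +
          2 * ‖f a‖ₑ * (ENNReal.ofReal δ * μ S) := by
        gcongr
        · exact hnorm S hS (hSR.trans (closedBall_subset_closedBall (min_le_right _ _)))
        · exact hac S hS (hSR.trans (closedBall_subset_closedBall (min_le_left _ _)))
    _ = ENNReal.ofReal (ε / 3 + ε / 3 + 2 * ‖f a‖ * δ) * μ S := by
        rw [ENNReal.ofReal_add (by positivity) (by positivity),
          ENNReal.ofReal_add (by positivity) (by positivity), ENNReal.ofReal_mul (by positivity),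
          ENNReal.ofReal_mul zero_le_two, ofReal_norm, ENNReal.ofReal_ofNat]
        ring
    _ ≤ ENNReal.ofReal ε * μ S := by gcongr; linarith

/-- If `𝒮` is a `μ`-a.e. `λ`-Morse cover of an open set `Ω ⊆ X`, `Y` a Banach space,
`f : Ω → Y` is `μ`-measurable, and `a ∈ Ω` is a point of approximate continuity of `f`
that is also a Lebesgue point of `x ↦ ‖f x‖` with respect to `‖f a‖`, then `a` is a
Lebesgue point of `f` with respect to `f a`. -/
theorem isLebesguePt_of_approxCont_and_norm_lebesguePt
    {X Y : Type*} [NormedAddCommGroup X] [NormedSpace ℝ X] [FiniteDimensional ℝ X]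
    [MeasurableSpace X] [OpensMeasurableSpace X]
    [NormedAddCommGroup Y] [NormedSpace ℝ Y] [CompleteSpace Y]
    (μ : Measure X) [μ.Regular] [μ.IsComplete]
    (lam : ℝ) (hlam : 1 ≤ lam) (Ω : Set X) (hΩ : IsOpen Ω)
    (𝒮 : Set (X × Set X)) (h𝒮 : IsAEMorseCover μ lam Ω 𝒮)
    (f : X → Y) (hf : MuMeasurable (μ.restrict Ω) f)
    (a : X) (ha : a ∈ Ω)
    (hac : IsApproxContPt μ 𝒮 f a)
    (hnorm : IsLebesguePt μ 𝒮 (fun x => ‖f x‖) a ‖f a‖) :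
    IsLebesguePt μ 𝒮 f a (f a) :=
  isLebesguePt_of_approxCont_and_norm_lebesguePt_general μ lam Ω 𝒮 h𝒮 f hf a hac hnorm
end
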